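/- Let A ∈ ℂ^{n×n} be a normal matrix and let k ≥ 1. Then the supremum over all unit vectors v ∈ ℂⁿ of the infimum of ‖A^k v − Σ_{i=0}^{k-1} αᵢ Aⁱ v‖ over all coefficients α₀, …, α_{k−1} ∈ ℂ equals the infimum over monic polynomials p ∈ ℂ[X] of degree exactly k of the spectral norm ‖p(A)‖. (This is the Chebyshev matrix approximation instance f(z) = z^k, φᵢ(z) = z^{i−1} of the max-min/min-max equality.) -/

import Mathlib

/-!
A normal operator has an orthonormal eigenbasis `bⱼ` with eigenvalues `λⱼ`, so
`‖p(A) v‖² = ∑ⱼ |p(λⱼ)|² |vⱼ|²` and `‖p(A)‖ = maxⱼ |p(λⱼ)|`. The maps `p ↦ |p(λⱼ)|` are convex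
on the convex set of monic polynomials of degree `k`; separating the open box below the min-max
value `m` from `{y | ∃ p, ∀ j, |p(λⱼ)| ≤ yⱼ}` gives weights `w` in the standard simplex with
`∑ⱼ wⱼ |p(λⱼ)| ≥ m` for every such `p`. By Jensen the unit vector with coordinates `√wⱼ`
then satisfies `‖p(A) v‖ ≥ m` for all `p`, which is the nontrivial inequality.
-/

open Polynomial

lemma nonneg_of_forall_le_add_mul {a b u : ℝ} (h : ∀ c, 0 ≤ c → u ≤ a + c * b) : 0 ≤ b := by
  by_contra! hb
  have h0 := h 0 le_rfl
  have := h ((a - u + 1) / -b) (div_nonneg (by linarith) (by linarith))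
  rw [div_mul_eq_mul_div, div_neg, mul_div_cancel_right₀ _ hb.ne] at this
  linarith

section Minimax

variable {X ι : Type*} [AddCommGroup X] [Module ℝ X] [Nonempty ι] {s : Set X}
  {F : X → ι → ℝ}

lemma convex_setOf_exists_forall_le (hF : ∀ j, ConvexOn ℝ s (F · j)) :
    Convex ℝ {y : ι → ℝ | ∃ x ∈ s, ∀ j, F x j ≤ y j} := by
  rintro y ⟨x, hx, hxy⟩ z ⟨x', hx', hx'z⟩ a b ha hb hab
  refine ⟨a • x + b • x', (hF (Classical.arbitrary ι)).1 hx hx' ha hb hab, fun j => ?_⟩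
  calc F (a • x + b • x') j ≤ a • F x j + b • F x' j := (hF j).2 hx hx' ha hb hab
    _ ≤ a * y j + b * z j := by simp only [smul_eq_mul]; gcongr <;> simp [hxy, hx'z]

theorem exists_mem_stdSimplex_iInf_iSup_le_sum [Fintype ι] [Nonempty s]
    (hF : ∀ j, ConvexOn ℝ s (F · j)) (hF0 : ∀ x ∈ s, ∀ j, 0 ≤ F x j) :
    ∃ w ∈ stdSimplex ℝ ι, ∀ x ∈ s, ⨅ y : s, ⨆ j, F y j ≤ ∑ j, w j * F x j := by
  classical
  set E := ⨅ y : s, ⨆ j, F y j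
  have hE : ∀ x ∈ s, E ≤ ⨆ j, F x j := fun x hx =>
    ciInf_le (f := fun y : s => ⨆ j, F y j)
      ⟨0, Set.forall_mem_range.2 fun y => Real.iSup_nonneg (hF0 y y.2)⟩ ⟨x, hx⟩
  have hdisj : Disjoint (Set.univ.pi fun _ => Set.Iio E) {y | ∃ x ∈ s, ∀ j, F x j ≤ y j} := by
    rw [Set.disjoint_left]
    rintro y hyE ⟨x, hx, hxy⟩
    obtain ⟨j, hj⟩ := Finite.exists_max (F x)
    exact (hE x hx |>.trans (ciSup_le hj) |>.trans (hxy j)).not_gt (hyE j (Set.mem_univ j))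
  obtain ⟨g, u, hgE, hgF⟩ := geometric_hahn_banach_open (convex_pi fun _ _ => convex_Iio E)
    (isOpen_set_pi Set.finite_univ fun _ _ => isOpen_Iio) (convex_setOf_exists_forall_le hF) hdisj
  set w : ι → ℝ := fun j => g fun i => if j = i then 1 else 0
  have hg : ∀ y, g y = ∑ j, y j * w j := g.toLinearMap.pi_apply_eq_sum_univ
  obtain ⟨x₀, hx₀⟩ := ‹Nonempty s›
  have hw : ∀ j, 0 ≤ w j := fun j => nonneg_of_forall_le_add_mul (a := g (F x₀)) fun c hc => by
    have hmem : F x₀ + c • (fun i => if j = i then 1 else 0) ∈ {y | ∃ x ∈ s, ∀ j, F x j ≤ y j} :=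
      ⟨x₀, hx₀, fun i => by simp only [Pi.add_apply, Pi.smul_apply]; split_ifs <;> simp [hc]⟩
    simpa [w] using hgF _ hmem
  set W := ∑ j, w j
  have hsep : ∀ δ > 0, ∀ x ∈ s, (E - δ) * W < ∑ j, F x j * w j := fun δ hδ x hx => by
    have h1 := hgE (fun _ => E - δ) fun j _ => sub_lt_self E hδ
    have h2 := hgF (F x) ⟨x, hx, fun j => le_rfl⟩
    rw [hg, ← Finset.mul_sum] at h1
    rw [hg] at h2
    linarith
  have hW : 0 < W := by
    by_contra! hW
    have hW0 : W = 0 := le_antisymm hW (Finset.sum_nonneg fun j _ => hw j)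
    have hw0 : ∀ j, w j = 0 := by
      simpa [W, Finset.sum_eq_zero_iff_of_nonneg fun j _ => hw j] using hW0
    simpa [hw0, hW0] using hsep 1 one_pos x₀ hx₀
  refine ⟨fun j => w j / W,
    ⟨fun j => div_nonneg (hw j) hW.le, by rw [← Finset.sum_div, div_self hW.ne']⟩,
    fun x hx => le_of_forall_pos_lt_add fun δ hδ => ?_⟩
  rw [← sub_lt_iff_lt_add]
  have : ∑ j, w j / W * F x j = (∑ j, F x j * w j) / W := by
    rw [Finset.sum_div]; congr 1; ext j; ring
  rw [this, lt_div_iff₀ hW]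
  exact hsep δ hδ x hx

end Minimax

namespace Polynomial

lemma convex_setOf_monic_natDegree_eq {R : Type*} [Semiring R] [Nontrivial R] [Module ℝ R]
    (k : ℕ) : Convex ℝ {p : R[X] | p.Monic ∧ p.natDegree = k} := by
  have hS : {p : R[X] | p.Monic ∧ p.natDegree = k} = {p | p.natDegree ≤ k ∧ p.coeff k = 1} := by
    ext p; exact and_comm.trans ((isMonicOfDegree_iff' p k).symm.trans (isMonicOfDegree_iff p k))
  rw [hS]
  rintro p ⟨hp, hp1⟩ q ⟨hq, hq1⟩ a b - - hab
  refine ⟨natDegree_add_le_of_degree_le ((natDegree_smul_le a p).trans hp)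
    ((natDegree_smul_le b q).trans hq), ?_⟩
  rw [coeff_add, coeff_smul, coeff_smul, hp1, hq1, ← add_smul, hab, one_smul]

lemma iInf_X_pow_sub_sum_eq_iInf_monic {R β : Type*} [Ring R] [Nontrivial R] [InfSet β]
    (k : ℕ) (f : R[X] → β) :
    ⨅ α : Fin k → R, f (X ^ k - ∑ i : Fin k, C (α i) * X ^ (i : ℕ)) =
      ⨅ p : {p : R[X] // p.Monic ∧ p.natDegree = k}, f p := by
  have hdeg (α : Fin k → R) :
      (X ^ k - ∑ i : Fin k, C (α i) * X ^ (i : ℕ)).degree = (k : WithBot ℕ) := by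
    rw [degree_sub_eq_left_of_degree_lt] <;> rw [degree_X_pow]
    exact degree_sum_fin_lt α
  refine Function.Surjective.iInf_comp
    (g := fun p : {p : R[X] // p.Monic ∧ p.natDegree = k} => f p)
    (f := fun α => ⟨_, monic_X_pow_sub (degree_sum_fin_lt α),
      natDegree_eq_of_degree_eq_some (hdeg α)⟩) ?_
  rintro ⟨p, hp, rfl⟩
  refine ⟨fun i => -p.coeff i, Subtype.ext ?_⟩
  change _ = p
  conv_rhs => rw [hp.as_sum, ← Fin.sum_univ_eq_sum_range (fun i => C (p.coeff i) * X ^ i)]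
  simp [sub_eq_add_neg]

end Polynomial

namespace OrthonormalBasis

variable {ι 𝕜 E : Type*} [Fintype ι] [RCLike 𝕜] [NormedAddCommGroup E] [InnerProductSpace 𝕜 E]
  (b : OrthonormalBasis ι 𝕜 E) {S : E →L[𝕜] E} {c : ι → 𝕜}

lemma repr_apply_eq_mul_of_apply_eq_smul (hS : ∀ j, S (b j) = c j • b j) (x : E) (j : ι) :
    b.repr (S x) j = c j * b.repr x j := by
  classical
  conv_lhs => rw [← b.sum_repr x]
  simp [hS, b.repr_self, Pi.single_apply, mul_comm]

lemma norm_sq_apply_eq_sum_of_apply_eq_smul (hS : ∀ j, S (b j) = c j • b j) (x : E) :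
    ‖S x‖ ^ 2 = ∑ j, ‖c j‖ ^ 2 * ‖b.repr x j‖ ^ 2 := by
  rw [← b.repr.norm_map, EuclideanSpace.norm_sq_eq]
  simp only [repr_apply_eq_mul_of_apply_eq_smul b hS, norm_mul, mul_pow]

lemma opNorm_le_of_apply_eq_smul (hS : ∀ j, S (b j) = c j • b j) {M : ℝ} (hM0 : 0 ≤ M)
    (hM : ∀ j, ‖c j‖ ≤ M) : ‖S‖ ≤ M := by
  refine S.opNorm_le_bound hM0 fun x => le_of_sq_le_sq ?_ (by positivity)
  calc ‖S x‖ ^ 2 = ∑ j, ‖c j‖ ^ 2 * ‖b.repr x j‖ ^ 2 :=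
        b.norm_sq_apply_eq_sum_of_apply_eq_smul hS x
    _ ≤ ∑ j, M ^ 2 * ‖b.repr x j‖ ^ 2 := by gcongr; exact hM _
    _ = (M * ‖x‖) ^ 2 := by
      rw [← Finset.mul_sum, mul_pow, ← b.repr.norm_map x, EuclideanSpace.norm_sq_eq]

end OrthonormalBasis

namespace ContinuousLinearMap

open ComplexStarModule Module End

variable {E : Type*} [NormedAddCommGroup E] [InnerProductSpace ℂ E] [FiniteDimensional ℂ E]
  (T : E →L[ℂ] E) [IsStarNormal T]

theorem exists_orthonormalBasis_eigenvectors_of_isStarNormal {n : ℕ} (hn : finrank ℂ E = n) :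
    ∃ (b : OrthonormalBasis (Fin n) ℂ E) (μ : Fin n → ℂ), ∀ j, T (b j) = μ j • b j := by
  classical
  set R : E →ₗ[ℂ] E := ((ℜ T : E →L[ℂ] E) : E →ₗ[ℂ] E)
  set J : E →ₗ[ℂ] E := ((ℑ T : E →L[ℂ] E) : E →ₗ[ℂ] E)
  have hR : R.IsSymmetric := (ℜ T).2.isSymmetric
  have hJ : J.IsSymmetric := (ℑ T).2.isSymmetric
  have hRJ : Commute R J :=
    congrArg ContinuousLinearMap.toLinearMap (Commute.realPart_imaginaryPart T).eq
  set V : ℂ × ℂ → Submodule ℂ E := fun i => eigenspace R i.2 ⊓ eigenspace J i.1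
  have hV : DirectSum.IsInternal fun i : {i // V i ≠ ⊥} => V i :=
    DirectSum.isInternal_ne_bot_iff.mpr (hR.directSum_isInternal_of_commute hJ hRJ)
  have : Fintype {i // V i ≠ ⊥} :=
    have := WellFoundedGT.finite_of_iSupIndep hV.submodule_iSupIndep fun i => i.2
    Fintype.ofFinite _
  have hV' := (hR.orthogonalFamily_eigenspace_inf_eigenspace hJ).comp
    (Subtype.val_injective (p := fun i => V i ≠ ⊥))
  refine ⟨hV.subordinateOrthonormalBasis hn hV', fun j =>
    (hV.subordinateOrthonormalBasisIndex hn j hV').1.2 +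
      Complex.I * (hV.subordinateOrthonormalBasisIndex hn j hV').1.1, fun j => ?_⟩
  obtain ⟨hRj, hJj⟩ := hV.subordinateOrthonormalBasis_subordinate hn j hV'
  conv_lhs => rw [← realPart_add_I_smul_imaginaryPart T]
  rw [add_apply, smul_apply]
  change R _ + Complex.I • J _ = _
  rw [mem_eigenspace_iff.mp hRj, mem_eigenspace_iff.mp hJj, smul_smul, add_smul]

theorem exists_norm_eq_one_forall_iInf_norm_aeval_le [Nontrivial E] {S : Set ℂ[X]}
    (hS : Convex ℝ S) [Nonempty S] :
    ∃ v : E, ‖v‖ = 1 ∧ ∀ p ∈ S, ⨅ q : S, ‖aeval T (q : ℂ[X])‖ ≤ ‖aeval T p v‖ := by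
  obtain ⟨b, μ, hb⟩ := T.exists_orthonormalBasis_eigenvectors_of_isStarNormal rfl
  have : Nonempty (Fin (finrank ℂ E)) := Fin.pos_iff_nonempty.mp finrank_pos
  have hbp (p : ℂ[X]) (j) : aeval T p (b j) = p.eval (μ j) • b j := by
    have := aeval_algHom_apply (AlgHom.ofLinearMap (coeLM ℂ) rfl fun _ _ => rfl) T p
    exact (LinearMap.congr_fun this (b j)).symm.trans (aeval_apply_of_mem_apply_eq_smul (hb j))
  have hF (j) : ConvexOn ℝ S fun q : ℂ[X] => ‖q.eval (μ j)‖ :=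
    (convexOn_univ_norm.comp_linearMap ((leval (μ j)).restrictScalars ℝ)).subset
      (Set.subset_univ S) hS
  obtain ⟨w, ⟨hw0, hw1⟩, hw⟩ :=
    exists_mem_stdSimplex_iInf_iSup_le_sum hF fun _ _ _ => norm_nonneg _
  set v := b.repr.symm (WithLp.toLp 2 fun j => (√(w j) : ℂ))
  have hv (j) : ‖b.repr v j‖ ^ 2 = w j := by
    simp [v, Real.sq_sqrt (hw0 j)]
  refine ⟨v, ?_, fun p hp => ?_⟩
  · have : ‖v‖ ^ 2 = 1 := by
      rw [← b.repr.norm_map, EuclideanSpace.norm_sq_eq]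
      simp_rw [hv]
      exact hw1
    exact (pow_eq_one_iff_of_nonneg (norm_nonneg v) two_ne_zero).1 this
  calc ⨅ q : S, ‖aeval T (q : ℂ[X])‖ ≤ ⨅ q : S, ⨆ j, ‖(q : ℂ[X]).eval (μ j)‖ :=
        ciInf_mono ⟨0, Set.forall_mem_range.2 fun _ => norm_nonneg _⟩ fun q =>
          b.opNorm_le_of_apply_eq_smul (hbp q) (Real.iSup_nonneg fun _ => norm_nonneg _)
            fun j => le_ciSup (f := fun j => ‖(q : ℂ[X]).eval (μ j)‖)
              (Set.finite_range _).bddAbove j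
    _ ≤ ∑ j, w j * ‖p.eval (μ j)‖ := hw p hp
    _ ≤ ‖aeval T p v‖ := by
      refine le_of_sq_le_sq ?_ (norm_nonneg _)
      rw [b.norm_sq_apply_eq_sum_of_apply_eq_smul (hbp p)]
      simp_rw [hv, mul_comm _ (w _)]
      simpa only [smul_eq_mul] using (even_two.convexOn_pow.map_sum_le (t := Finset.univ)
        (fun j _ => hw0 j) hw1 fun _ _ => Set.mem_univ _)

theorem iSup_iInf_norm_aeval_apply_eq_iInf_norm_aeval {S : Set ℂ[X]} (hS : Convex ℝ S)
    [Nonempty S] :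
    ⨆ v : {v : E // ‖v‖ = 1}, ⨅ p : S, ‖aeval T (p : ℂ[X]) v‖ =
      ⨅ p : S, ‖aeval T (p : ℂ[X])‖ := by
  rcases subsingleton_or_nontrivial E with hE | hE
  · have : IsEmpty {v : E // ‖v‖ = 1} := ⟨fun v => by simpa [Subsingleton.elim v.1 0] using v.2⟩
    have hnorm (f : E →L[ℂ] E) : ‖f‖ = 0 := by rw [Subsingleton.elim f 0, norm_zero]
    simp only [Real.iSup_of_isEmpty, hnorm, ciInf_const]
  obtain ⟨v, hv, hvS⟩ := T.exists_norm_eq_one_forall_iInf_norm_aeval_le hS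
  obtain ⟨p₀⟩ := ‹Nonempty S›
  have hle (u : {v : E // ‖v‖ = 1}) (p : S) :
      ⨅ q : S, ‖aeval T (q : ℂ[X]) u‖ ≤ ‖aeval T (p : ℂ[X])‖ := by
    refine (ciInf_le ⟨0, Set.forall_mem_range.2 fun _ => norm_nonneg _⟩ p).trans ?_
    simpa [u.2] using (aeval T (p : ℂ[X])).le_opNorm u
  have : Nonempty {v : E // ‖v‖ = 1} := ⟨⟨v, hv⟩⟩
  have hbdd :
      BddAbove (Set.range fun u : {v : E // ‖v‖ = 1} => ⨅ q : S, ‖aeval T (q : ℂ[X]) u‖) :=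
    ⟨_, Set.forall_mem_range.2 (hle · p₀)⟩
  refine le_antisymm (ciSup_le fun u => le_ciInf (hle u)) ?_
  have h1 : ⨅ q : S, ‖aeval T (q : ℂ[X])‖ ≤ ⨅ q : S, ‖aeval T (q : ℂ[X]) v‖ :=
    le_ciInf fun p => hvS p.1 p.2
  exact h1.trans (le_ciSup hbdd ⟨v, hv⟩)

end ContinuousLinearMap

open Matrix Polynomial

/-- The Chebyshev matrix approximation instance of the max-min/min-max equality
for a normal complex matrix: `f(z) = z^k`, `φᵢ(z) = z^{i-1}`. -/
theorem maxmin_eq_minmax_chebyshev_normal_complex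
    (n k : ℕ) (A : Matrix (Fin n) (Fin n) ℂ) (hA : Aᴴ * A = A * Aᴴ) :
    (⨆ v : {v : EuclideanSpace ℂ (Fin n) // ‖v‖ = 1},
      ⨅ α : Fin k → ℂ,
        ‖Matrix.toEuclideanCLM (𝕜 := ℂ) (A ^ k) v.1
          - ∑ i : Fin k, α i • Matrix.toEuclideanCLM (𝕜 := ℂ) (A ^ (i : ℕ)) v.1‖)
    = ⨅ p : {p : Polynomial ℂ // p.Monic ∧ p.natDegree = k},
        ‖Matrix.toEuclideanCLM (𝕜 := ℂ) (aeval A p.1)‖ := by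
  have : IsStarNormal A := ⟨hA⟩
  have : Nonempty {p : ℂ[X] | p.Monic ∧ p.natDegree = k} :=
    ⟨⟨X ^ k, monic_X_pow k, natDegree_X_pow k⟩⟩
  set T := Matrix.toEuclideanCLM (𝕜 := ℂ) A
  have hexpr (α : Fin k → ℂ) (v : EuclideanSpace ℂ (Fin n)) :
      Matrix.toEuclideanCLM (𝕜 := ℂ) (A ^ k) v
        - ∑ i : Fin k, α i • Matrix.toEuclideanCLM (𝕜 := ℂ) (A ^ (i : ℕ)) v
      = aeval T (X ^ k - ∑ i : Fin k, C (α i) * X ^ (i : ℕ)) v := by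
    simp [T]
  have hT (p : ℂ[X]) : Matrix.toEuclideanCLM (𝕜 := ℂ) (aeval A p) = aeval T p :=
    (aeval_algHom_apply _ A p).symm
  simp_rw [hexpr, hT]
  have hparam (v : {v : EuclideanSpace ℂ (Fin n) // ‖v‖ = 1}) :=
    iInf_X_pow_sub_sum_eq_iInf_monic (R := ℂ) k fun p => ‖aeval T p v.1‖
  rw [iSup_congr hparam]
  have : IsStarNormal T := IsStarNormal.map _ A
  exact T.iSup_iInf_norm_aeval_apply_eq_iInf_norm_aeval
    (S := {p | p.Monic ∧ p.natDegree = k}) (convex_setOf_monic_natDegree_eq k)
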